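/- Let α ∈ ℝ and define the null-point magnetic field B : ℝ³ → ℝ³ by B(x) := (x₂, α·x₁, 0). Then: (a) curl B = (0, 0, α − 1) and div B = 0; (b) B × (curl B) = ∇q where q(x) := ((α − 1)/2)·(α·x₁² − x₂²); (c) for any d_e > 0 and d_i ≥ 0, the pair (v, B*) := (0, B) together with B and the pressure p := −q is a stationary solution of incompressible extended MHD, i.e. B* = B + d_e²·curl(curl B), (v·∇)v + ∇p + B* × (curl B) = 0, and curl(B* × (v − d_i·curl B)) + d_e²·curl((curl v) × (curl B)) = 0. -/

import Mathlib

/-! `curl B` is the constant field `(0, 0, α - 1)`, so `curl curl B = 0` and `B* = B`, and a direct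
computation gives `B × curl B = ∇q`, which the pressure `-q` balances in the momentum equation.
In the induction equation `v = 0` kills the `d_e²` term, and the remaining term is
`curl (B × (-d_i curl B)) = -d_i curl ∇q`, which vanishes because second partial derivatives of
the smooth potential `q` commute. -/

noncomputable section

open MeasureTheory Real

/-- Euclidean 3-space. -/
abbrev E3 : Type := EuclideanSpace ℝ (Fin 3)

/-- Build a vector in `E3` from three coordinates. -/
def mk3 (a b c : ℝ) : E3 := (WithLp.equiv 2 (Fin 3 → ℝ)).symm ![a, b, c]

/-- Partial derivative in the `i`-th coordinate direction. -/
def pd (i : Fin 3) (f : E3 → ℝ) (x : E3) : ℝ :=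
  fderiv ℝ f x (EuclideanSpace.single i 1)

/-- Curl of a vector field on `ℝ³`. -/
def ecurl (f : E3 → E3) (x : E3) : E3 :=
  mk3 (pd 1 (fun y => f y 2) x - pd 2 (fun y => f y 1) x)
      (pd 2 (fun y => f y 0) x - pd 0 (fun y => f y 2) x)
      (pd 0 (fun y => f y 1) x - pd 1 (fun y => f y 0) x)

/-- Divergence of a vector field on `ℝ³`. -/
def ediv (f : E3 → E3) (x : E3) : ℝ :=
  pd 0 (fun y => f y 0) x + pd 1 (fun y => f y 1) x + pd 2 (fun y => f y 2) x

/-- Gradient of a scalar field on `ℝ³`. -/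
def egrad (h : E3 → ℝ) (x : E3) : E3 :=
  mk3 (pd 0 h x) (pd 1 h x) (pd 2 h x)

/-- Cross product on `ℝ³`. -/
def cross3 (u w : E3) : E3 :=
  mk3 (u 1 * w 2 - u 2 * w 1) (u 2 * w 0 - u 0 * w 2) (u 0 * w 1 - u 1 * w 0)

/-- Advection `(g · ∇) f` of a vector field `f` along the vector `g`. -/
def advect (g : E3) (f : E3 → E3) (x : E3) : E3 :=
  mk3 (∑ j, g j * pd j (fun y => f y 0) x)
      (∑ j, g j * pd j (fun y => f y 1) x)
      (∑ j, g j * pd j (fun y => f y 2) x)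

/-- Componentwise Laplacian of a vector field on `ℝ³`. -/
def elap (f : E3 → E3) (x : E3) : E3 :=
  mk3 (∑ i, pd i (fun y => pd i (fun z => f z 0) y) x)
      (∑ i, pd i (fun y => pd i (fun z => f z 1) y) x)
      (∑ i, pd i (fun y => pd i (fun z => f z 2) y) x)

/-- Time derivative of a time-dependent vector field. -/
def tderiv (f : ℝ → E3 → E3) (t : ℝ) (x : E3) : E3 :=
  deriv (fun s => f s x) t


@[simp] lemma mk3_apply_zero (a b c : ℝ) : mk3 a b c 0 = a := rfl
@[simp] lemma mk3_apply_one (a b c : ℝ) : mk3 a b c 1 = b := rfl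
@[simp] lemma mk3_apply_two (a b c : ℝ) : mk3 a b c 2 = c := rfl

lemma E3.ext_fin {u w : E3} (h0 : u 0 = w 0) (h1 : u 1 = w 1) (h2 : u 2 = w 2) : u = w := by
  ext i; fin_cases i <;> assumption

@[simp] lemma mk3_zero : mk3 0 0 0 = 0 := E3.ext_fin rfl rfl rfl

section PartialDerivatives

variable {f g : E3 → ℝ} {x : E3}

@[simp] lemma pd_const (i : Fin 3) (c : ℝ) : pd i (fun _ => c) x = 0 := by simp [pd]

@[simp] lemma pd_coord (i j : Fin 3) : pd i (fun y => y j) x = if j = i then 1 else 0 := by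
  rw [pd, show (fun y : E3 => y j) = ⇑(EuclideanSpace.proj (𝕜 := ℝ) j) from rfl,
    ContinuousLinearMap.fderiv]
  simp

@[simp] lemma pd_neg (i : Fin 3) : pd i (fun y => -f y) x = -pd i f x := by
  simp [pd, fderiv_fun_neg]

@[simp] lemma pd_const_mul (i : Fin 3) (c : ℝ) : pd i (fun y => c * f y) x = c * pd i f x := by
  rw [pd, show (fun y => c * f y) = c • f from rfl, fderiv_const_smul_field]
  rfl

lemma pd_sub (i : Fin 3) (hf : DifferentiableAt ℝ f x) (hg : DifferentiableAt ℝ g x) :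
    pd i (fun y => f y - g y) x = pd i f x - pd i g x := by
  simp [pd, fderiv_fun_sub hf hg]

lemma pd_pow (i : Fin 3) (n : ℕ) (hf : DifferentiableAt ℝ f x) :
    pd i (fun y => f y ^ n) x = n * f x ^ (n - 1) * pd i f x := by
  simp [pd, fderiv_fun_pow n hf, mul_assoc]

lemma pd_pd_comm (i j : Fin 3) (hf : ContDiffAt ℝ 2 f x) :
    pd i (pd j f) x = pd j (pd i f) x := by
  have hd : DifferentiableAt ℝ (fderiv ℝ f) x :=
    (hf.fderiv_right (by norm_num)).differentiableAt one_ne_zero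
  have key : ∀ k l : Fin 3, pd k (pd l f) x =
      fderiv ℝ (fderiv ℝ f) x (EuclideanSpace.single k 1) (EuclideanSpace.single l 1) := by
    intro k l
    rw [pd, show pd l f = fun y => fderiv ℝ f y (EuclideanSpace.single l 1) from rfl,
      fderiv_clm_apply hd (differentiableAt_const _)]
    simp
  rw [key, key, hf.isSymmSndFDerivAt (by simp)]

end PartialDerivatives

@[simp] lemma ecurl_const (c : E3) (x : E3) : ecurl (fun _ => c) x = 0 := by simp [ecurl]

lemma ecurl_const_smul (c : ℝ) (f : E3 → E3) (x : E3) :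
    ecurl (fun y => c • f y) x = c • ecurl f x := by
  refine E3.ext_fin ?_ ?_ ?_ <;> simp [ecurl] <;> ring

lemma ecurl_egrad {h : E3 → ℝ} {x : E3} (hh : ContDiffAt ℝ 2 h x) : ecurl (egrad h) x = 0 := by
  refine E3.ext_fin ?_ ?_ ?_ <;> simp [ecurl, egrad, pd_pd_comm _ _ hh]

lemma egrad_neg (h : E3 → ℝ) (x : E3) : egrad (fun y => -h y) x = -egrad h x := by
  refine E3.ext_fin ?_ ?_ ?_ <;> simp [egrad]

@[simp] lemma cross3_zero_left (w : E3) : cross3 0 w = 0 := by simp [cross3]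

lemma cross3_smul_right (c : ℝ) (u w : E3) : cross3 u (c • w) = c • cross3 u w := by
  refine E3.ext_fin ?_ ?_ ?_ <;> simp [cross3] <;> ring

@[simp] lemma advect_zero_left (f : E3 → E3) (x : E3) : advect 0 f x = 0 := by simp [advect]

def nullPointField (α : ℝ) (x : E3) : E3 := mk3 (x 1) (α * x 0) 0

def nullPointPotential (α : ℝ) (x : E3) : ℝ := ((α - 1) / 2) * (α * (x 0)^2 - (x 1)^2)

lemma ecurl_nullPointField (α : ℝ) (x : E3) : ecurl (nullPointField α) x = mk3 0 0 (α - 1) := by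
  simp [ecurl, nullPointField]

lemma ediv_nullPointField (α : ℝ) (x : E3) : ediv (nullPointField α) x = 0 := by
  simp [ediv, nullPointField]

lemma egrad_nullPointPotential (α : ℝ) (x : E3) :
    egrad (nullPointPotential α) x = mk3 ((α - 1) * α * x 0) (-((α - 1) * x 1)) 0 := by
  unfold nullPointPotential
  refine E3.ext_fin ?_ ?_ ?_ <;> simp (disch := fun_prop) [egrad, pd_sub, pd_pow] <;> ring

lemma cross3_nullPointField_ecurl (α : ℝ) (x : E3) :
    cross3 (nullPointField α x) (ecurl (nullPointField α) x) = egrad (nullPointPotential α) x := by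
  rw [ecurl_nullPointField, egrad_nullPointPotential]
  refine E3.ext_fin ?_ ?_ ?_ <;> simp [cross3, nullPointField] <;> ring

lemma contDiff_nullPointPotential (α : ℝ) : ContDiff ℝ 2 (nullPointPotential α) := by
  unfold nullPointPotential; fun_prop

/-- The null-point field `B(x) = (x₂, αx₁, 0)`:
`curl B = (0,0,α−1)`, `div B = 0`, `B × curl B = ∇q` with
`q = ((α−1)/2)(αx₁² − x₂²)`, and `(0, B)` with pressure `−q` is a stationary solution of
incompressible extended MHD for any `d_e > 0`, `d_i ≥ 0`. -/
theorem null_point_stationary_solution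
    (α : ℝ)
    (B : E3 → E3) (hB : ∀ x, B x = mk3 (x 1) (α * x 0) 0)
    (q : E3 → ℝ) (hq : ∀ x, q x = ((α - 1) / 2) * (α * (x 0)^2 - (x 1)^2)) :
    (∀ x, ecurl B x = mk3 0 0 (α - 1) ∧ ediv B x = 0) ∧
    (∀ x, cross3 (B x) (ecurl B x) = egrad q x) ∧
    (∀ de di : ℝ, 0 < de → 0 ≤ di →
      (∀ x, B x = B x + de^2 • ecurl (ecurl B) x) ∧
      (∀ x, advect ((0 : E3)) (fun _ => (0 : E3)) x + egrad (fun y => -(q y)) x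
          + cross3 (B x) (ecurl B x) = 0) ∧
      (∀ x, ecurl (fun y => cross3 (B y) ((0 : E3) - di • ecurl B y)) x
          + de^2 • ecurl (fun y => cross3 (ecurl (fun _ => (0 : E3)) y) (ecurl B y)) x
          = 0)) := by
  obtain rfl : B = nullPointField α := funext hB
  obtain rfl : q = nullPointPotential α := funext hq
  have hcurl : ecurl (nullPointField α) = fun _ => mk3 0 0 (α - 1) :=
    funext (ecurl_nullPointField α)
  have hlorentz := cross3_nullPointField_ecurl α
  refine ⟨fun x => ⟨ecurl_nullPointField α x, ediv_nullPointField α x⟩, hlorentz,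
    fun de di _ _ => ⟨fun x => by simp [hcurl], fun x => by simp [egrad_neg, hlorentz], fun x => ?_⟩⟩
  have hhall : (fun y => cross3 (nullPointField α y) ((0 : E3) - di • ecurl (nullPointField α) y))
      = fun y => (-di) • egrad (nullPointPotential α) y := by
    funext y; rw [zero_sub, ← neg_smul, cross3_smul_right, hlorentz]
  rw [hhall, ecurl_const_smul, ecurl_egrad (contDiff_nullPointPotential α).contDiffAt]
  simp
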